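/- arXiv:1005.4319 — 2 statements merged into one kernel-verified Lean document; each statement's English description precedes it below -/
import Mathlib

section
/- Let A be a Banach algebra with A***A** ⊆ A* (for every Φ in A*** and F in A**, the functional G ↦ <Φ, FG> on A** is represented by an element of A*). If A** (with the first Arens product) is weakly amenable, then A is weakly amenable. -/
open NormedSpace ContinuousLinearMap Filter

set_option maxHeartbeats 1000000

noncomputable section

/-- The topological dual of a normed space, as `NormedSpace.Dual` was in the older Mathlib. -/
abbrev NormedSpace.Dual (𝕜 : Type*) [NontriviallyNormedField 𝕜] (E : Type*)
    [SeminormedAddCommGroup E] [NormedSpace 𝕜 E] : Type _ :=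
  E →L[𝕜] 𝕜

/-- The adjoint (dual map) of a continuous linear map: `dMap T φ = φ ∘ T`. -/
def dMap {E F : Type*} [NormedAddCommGroup E] [NormedSpace ℝ E]
    [NormedAddCommGroup F] [NormedSpace ℝ F] (T : E →L[ℝ] F) :
    Dual ℝ F →L[ℝ] Dual ℝ E :=
  (ContinuousLinearMap.compL ℝ E F ℝ).flip T

/-- The double adjoint of a continuous linear map. -/
def ddMap {E F : Type*} [NormedAddCommGroup E] [NormedSpace ℝ E]
    [NormedAddCommGroup F] [NormedSpace ℝ F] (T : E →L[ℝ] F) :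
    Dual ℝ (Dual ℝ E) →L[ℝ] Dual ℝ (Dual ℝ F) :=
  dMap (dMap T)

/-- The (first, left) Arens extension of a bounded bilinear map `m : E × F → G` to the
biduals, via the classical three steps:
`⟨g'·e, f⟩ = ⟨g', m e f⟩`, `⟨Ψ·g', e⟩ = ⟨Ψ, g'·e⟩`, `⟨arensExt m Φ Ψ, g'⟩ = ⟨Φ, Ψ·g'⟩`. -/
def arensExt {E F G : Type*} [NormedAddCommGroup E] [NormedSpace ℝ E]
    [NormedAddCommGroup F] [NormedSpace ℝ F] [NormedAddCommGroup G] [NormedSpace ℝ G]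
    (m : E →L[ℝ] F →L[ℝ] G) :
    Dual ℝ (Dual ℝ E) →L[ℝ] Dual ℝ (Dual ℝ F) →L[ℝ] Dual ℝ (Dual ℝ G) :=
  let s1 : E →L[ℝ] (Dual ℝ G →L[ℝ] Dual ℝ F) :=
    ((ContinuousLinearMap.compL ℝ F G ℝ).flip).comp m
  let s2 : Dual ℝ G →L[ℝ] (Dual ℝ (Dual ℝ F) →L[ℝ] Dual ℝ E) :=
    ((ContinuousLinearMap.compL ℝ E (Dual ℝ F) ℝ).flip).comp s1.flip
  (((ContinuousLinearMap.compL ℝ (Dual ℝ G) (Dual ℝ E) ℝ).flip).comp s2.flip).flip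

/-- The first Arens product on the bidual of a (possibly non-unital) Banach algebra:
`⟨F G, a'⟩ = ⟨F, G·a'⟩` where `⟨G·a', a⟩ = ⟨G, a'·a⟩` and `⟨a'·a, b⟩ = ⟨a', a*b⟩`. -/
def arens1 (A : Type*) [NonUnitalNormedRing A] [NormedSpace ℝ A]
    [IsScalarTower ℝ A A] [SMulCommClass ℝ A A] :
    Dual ℝ (Dual ℝ A) →L[ℝ] Dual ℝ (Dual ℝ A) →L[ℝ] Dual ℝ (Dual ℝ A) :=
  arensExt (ContinuousLinearMap.mul ℝ A)

/-- The second Arens product on the bidual of a (possibly non-unital) Banach algebra: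
`⟨F ∘ G, a'⟩ = ⟨G, a'∘F⟩` where `⟨a'∘F, a⟩ = ⟨F, a∘a'⟩` and `⟨a∘a', b⟩ = ⟨a', b*a⟩`. -/
def arens2 (A : Type*) [NonUnitalNormedRing A] [NormedSpace ℝ A]
    [IsScalarTower ℝ A A] [SMulCommClass ℝ A A] :
    Dual ℝ (Dual ℝ A) →L[ℝ] Dual ℝ (Dual ℝ A) →L[ℝ] Dual ℝ (Dual ℝ A) :=
  (arensExt ((ContinuousLinearMap.mul ℝ A).flip)).flip

/-- `f`, a map from a dual space to a normed space, is weak-star-to-weak continuous. -/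
def WstarToWeakContinuous {E F : Type*} [NormedAddCommGroup E] [NormedSpace ℝ E]
    [NormedAddCommGroup F] [NormedSpace ℝ F]
    (f : Dual ℝ E → F) : Prop :=
  Continuous fun x : WeakDual ℝ E => toWeakSpace ℝ F (f x)
variable {A : Type*} [NonUnitalNormedRing A] [NormedSpace ℝ A]
  [IsScalarTower ℝ A A] [SMulCommClass ℝ A A] [CompleteSpace A]

variable (A) in
/-- The left action of `a ∈ A` on `a' ∈ A*`: `⟨a·a', x⟩ = ⟨a', x*a⟩`. -/
def dualActL (a : A) : Dual ℝ A →L[ℝ] Dual ℝ A :=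
  dMap ((ContinuousLinearMap.mul ℝ A).flip a)

variable (A) in
/-- The right action of `a ∈ A` on `a' ∈ A*`: `⟨a'·a, x⟩ = ⟨a', a*x⟩`. -/
def dualActR (a : A) : Dual ℝ A →L[ℝ] Dual ℝ A :=
  dMap (ContinuousLinearMap.mul ℝ A a)

variable (A) in
/-- The left action of `H ∈ A**` (first Arens product) on `Φ ∈ A***`:
`⟨H·Φ, G⟩ = ⟨Φ, G H⟩`. -/
def triActL (H : Dual ℝ (Dual ℝ A)) :
    Dual ℝ (Dual ℝ (Dual ℝ A)) →L[ℝ] Dual ℝ (Dual ℝ (Dual ℝ A)) :=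
  dMap (E := Dual ℝ (Dual ℝ A)) (F := Dual ℝ (Dual ℝ A)) ((arens1 A).flip H)

variable (A) in
/-- The right action of `H ∈ A**` (first Arens product) on `Φ ∈ A***`:
`⟨Φ·H, G⟩ = ⟨Φ, H G⟩`. -/
def triActR (H : Dual ℝ (Dual ℝ A)) :
    Dual ℝ (Dual ℝ (Dual ℝ A)) →L[ℝ] Dual ℝ (Dual ℝ (Dual ℝ A)) :=
  dMap (E := Dual ℝ (Dual ℝ A)) (F := Dual ℝ (Dual ℝ A)) (arens1 A H)


/-! The second adjoint `D''` of a derivation `D : A → A*` is a derivation `A** → A***`.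
Expanding `D''(FG)(H) = F(G·(H∘D))` with the derivation rule for `D` gives `D''(F)(GH)` plus
`F` applied to the functional `a ↦ D''(G)(Ha)`. The hypothesis `A***·A** ⊆ A*` says that this
functional is some `c ∈ A*` with `D''(G)(HK) = K(c)` for all `K ∈ A**`, so the second term is
`D''(G)(HF)`. Weak amenability of `A**` makes `D''` inner, implemented by some `Φ ∈ A***`; since
`D''` extends `D` and the Arens product extends the product of `A`, the restriction of `Φ` to
`A ⊆ A**` implements `D`. -/

section Adjoints

variable {E F : Type*} [NormedAddCommGroup E] [NormedSpace ℝ E]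
  [NormedAddCommGroup F] [NormedSpace ℝ F]

lemma ddMap_inclusionInDoubleDual (T : E →L[ℝ] F) (e : E) :
    ddMap T (inclusionInDoubleDual ℝ E e) = inclusionInDoubleDual ℝ F (T e) := rfl

lemma inclusionInDoubleDual_comp_inclusionInDoubleDual (φ : Dual ℝ E) :
    (inclusionInDoubleDual ℝ (Dual ℝ E) φ).comp (inclusionInDoubleDual ℝ E) = φ := rfl

lemma arensExt_inclusionInDoubleDual {G : Type*} [NormedAddCommGroup G] [NormedSpace ℝ G]
    (m : E →L[ℝ] F →L[ℝ] G) (e : E) (f : F) :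
    arensExt m (inclusionInDoubleDual ℝ E e) (inclusionInDoubleDual ℝ F f)
      = inclusionInDoubleDual ℝ G (m e f) := rfl

end Adjoints

section DualModules

variable {B : Type*} [NonUnitalNormedRing B] [NormedSpace ℝ B]
  [IsScalarTower ℝ B B] [SMulCommClass ℝ B B]

variable (B) in
def dualActRL : B →L[ℝ] Dual ℝ B →L[ℝ] Dual ℝ B :=
  (ContinuousLinearMap.compL ℝ B B ℝ).flip.comp (ContinuousLinearMap.mul ℝ B)

lemma dualActRL_apply (a : B) : dualActRL B a = dualActR B a := rfl

lemma arens1_inclusionInDoubleDual (a b : B) :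
    arens1 B (inclusionInDoubleDual ℝ B a) (inclusionInDoubleDual ℝ B b)
      = inclusionInDoubleDual ℝ B (a * b) :=
  arensExt_inclusionInDoubleDual _ a b

lemma comp_inclusionInDoubleDual_triActL (a : B) (Φ : Dual ℝ (Dual ℝ (Dual ℝ B))) :
    (triActL B (inclusionInDoubleDual ℝ B a) Φ).comp (inclusionInDoubleDual ℝ B)
      = dualActL B a (Φ.comp (inclusionInDoubleDual ℝ B)) := by
  ext b
  exact congrArg Φ (arens1_inclusionInDoubleDual b a)

lemma comp_inclusionInDoubleDual_triActR (a : B) (Φ : Dual ℝ (Dual ℝ (Dual ℝ B))) :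
    (triActR B (inclusionInDoubleDual ℝ B a) Φ).comp (inclusionInDoubleDual ℝ B)
      = dualActR B a (Φ.comp (inclusionInDoubleDual ℝ B)) := by
  ext b
  exact congrArg Φ (arens1_inclusionInDoubleDual a b)

variable {D : B →L[ℝ] Dual ℝ B}

lemma dualActR_comp_of_derivation
    (hD : ∀ a b : B, D (a * b) = dualActL B a (D b) + dualActR B b (D a))
    (H : Dual ℝ (Dual ℝ B)) (a : B) :
    dualActR B a (H.comp D)
      = (arens1 B H (inclusionInDoubleDual ℝ B a)).comp D
        + H.comp ((dualActRL B).flip (D a)) := by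
  ext b
  change H (D (a * b)) = _
  rw [hD a b, map_add]
  rfl

lemma comp_dualActRL_flip_of_derivation
    (hD : ∀ a b : B, D (a * b) = dualActL B a (D b) + dualActR B b (D a))
    {G H : Dual ℝ (Dual ℝ B)} {c : Dual ℝ B}
    (hc : ∀ K : Dual ℝ (Dual ℝ B), ddMap D G (arens1 B H K) = K c) :
    G.comp ((dualActRL B).flip (H.comp D)) = c + (arens1 B G H).comp D := by
  ext a
  have hca : ddMap D G (arens1 B H (inclusionInDoubleDual ℝ B a)) = c a :=
    hc (inclusionInDoubleDual ℝ B a)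
  calc G ((dualActRL B).flip (H.comp D) a)
      = G ((arens1 B H (inclusionInDoubleDual ℝ B a)).comp D)
          + G (H.comp ((dualActRL B).flip (D a))) := by
        rw [flip_apply, dualActRL_apply, dualActR_comp_of_derivation hD, map_add]
    _ = c a + arens1 B G H (D a) := by rw [← hca]; rfl

lemma ddMap_derivation
    (hcond : ∀ (Φ : Dual ℝ (Dual ℝ (Dual ℝ B))) (F : Dual ℝ (Dual ℝ B)),
      ∃ φ : Dual ℝ B, ∀ G : Dual ℝ (Dual ℝ B), Φ (arens1 B F G) = G φ)
    (hD : ∀ a b : B, D (a * b) = dualActL B a (D b) + dualActR B b (D a))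
    (F G : Dual ℝ (Dual ℝ B)) :
    ddMap D (arens1 B F G) = triActL B F (ddMap D G) + triActR B G (ddMap D F) := by
  ext H
  obtain ⟨c, hc⟩ := hcond (ddMap D G) H
  calc ddMap D (arens1 B F G) H
      = F (G.comp ((dualActRL B).flip (H.comp D))) := rfl
    _ = F c + F ((arens1 B G H).comp D) := by
        rw [comp_dualActRL_flip_of_derivation hD hc, map_add]
    _ = ddMap D G (arens1 B H F) + ddMap D F (arens1 B G H) := by rw [← hc F]; rfl

end DualModules

/-- If `A*** · A** ⊆ A*` and `A**` (first Arens product) is weakly amenable, then `A` is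
weakly amenable. -/
theorem weaklyAmenable_of_bidual_tripleDualCond
    (hcond : ∀ (Φ : Dual ℝ (Dual ℝ (Dual ℝ A))) (F : Dual ℝ (Dual ℝ A)),
      ∃ a' : Dual ℝ A, ∀ G : Dual ℝ (Dual ℝ A), Φ (arens1 A F G) = G a')
    (hamen : ∀ 𝒟 : Dual ℝ (Dual ℝ A) →L[ℝ] Dual ℝ (Dual ℝ (Dual ℝ A)),
      (∀ F G : Dual ℝ (Dual ℝ A),
        𝒟 (arens1 A F G) = triActL A F (𝒟 G) + triActR A G (𝒟 F)) →
      ∃ Φ : Dual ℝ (Dual ℝ (Dual ℝ A)), ∀ F : Dual ℝ (Dual ℝ A),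
        𝒟 F = triActL A F Φ - triActR A F Φ)
    (D : A →L[ℝ] Dual ℝ A)
    (hD : ∀ a b : A, D (a * b) = dualActL A a (D b) + dualActR A b (D a)) :
    ∃ f : Dual ℝ A, ∀ a : A, D a = dualActL A a f - dualActR A a f := by
  obtain ⟨Φ, hΦ⟩ := hamen (ddMap D) (ddMap_derivation hcond hD)
  refine ⟨Φ.comp (inclusionInDoubleDual ℝ A), fun a => ?_⟩
  calc D a = (ddMap D (inclusionInDoubleDual ℝ A a)).comp (inclusionInDoubleDual ℝ A) := by
        rw [ddMap_inclusionInDoubleDual, inclusionInDoubleDual_comp_inclusionInDoubleDual]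
    _ = _ := by
        rw [hΦ, sub_comp, comp_inclusionInDoubleDual_triActL, comp_inclusionInDoubleDual_triActR]
end
end

section
/- Let A be a Banach algebra and D : A → A* a surjective derivation such that D''(A**)·A** ⊆ A*, where D'' : A** → A*** is the double adjoint. Then A is Arens regular. -/
open NormedSpace ContinuousLinearMap Filter

noncomputable section

variable {A : Type*} [NonUnitalNormedRing A] [NormedSpace ℝ A]
  [IsScalarTower ℝ A A] [SMulCommClass ℝ A A] [CompleteSpace A]

/-!
Since `D : A → A*` is onto, the open mapping theorem makes its adjoint `D' : A** → A*` bounded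
below, and Hahn–Banach then makes `D'' : A** → A***` onto. So the hypothesis gives, for every
`φ ∈ A*` and `F ∈ A**`, some `a' ∈ A*` with `⟨F □ G, φ⟩ = ⟨G, a'⟩` for all `G`: the map
`G ↦ F □ G` is weak*-continuous. So is `G ↦ F ◇ G`, and the two products agree when `G ∈ A`.
-/

section Adjoint

variable {E F : Type*} [NormedAddCommGroup E] [NormedSpace ℝ E] [CompleteSpace E]
  [NormedAddCommGroup F] [NormedSpace ℝ F] [CompleteSpace F]

theorem antilipschitz_dMap_of_surjective (T : E →L[ℝ] F) (hT : Function.Surjective T) :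
    ∃ K, AntilipschitzWith K (dMap T) := by
  obtain ⟨C, hC, hpre⟩ := T.exists_preimage_norm_le hT
  refine ⟨C.toNNReal, (dMap T).antilipschitz_of_bound fun Ψ => ?_⟩
  rw [Real.coe_toNNReal C hC.le]
  refine Ψ.opNorm_le_bound (by positivity) fun y => ?_
  obtain ⟨x, rfl, hx⟩ := hpre y
  calc ‖Ψ (T x)‖ = ‖dMap T Ψ x‖ := rfl
    _ ≤ ‖dMap T Ψ‖ * ‖x‖ := (dMap T Ψ).le_opNorm x
    _ ≤ ‖dMap T Ψ‖ * (C * ‖T x‖) := by gcongr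
    _ = C * ‖dMap T Ψ‖ * ‖T x‖ := by ring

theorem dMap_surjective_of_antilipschitz (S : E →L[ℝ] F) {K : NNReal}
    (hS : AntilipschitzWith K S) : Function.Surjective (dMap S) := by
  intro f
  let e := S.equivRange hS.injective (hS.isClosed_range S.uniformContinuous)
  obtain ⟨g, hg, -⟩ := exists_extension_norm_eq _ (f.comp e.symm.toContinuousLinearMap)
  refine ⟨g, ContinuousLinearMap.ext fun x => ?_⟩
  calc dMap S g x = g (e x) := rfl
    _ = f x := by
      rw [hg, coe_comp, Function.comp_apply, ContinuousLinearEquiv.coe_coe, e.symm_apply_apply]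

theorem ddMap_surjective_of_surjective (T : E →L[ℝ] F) (hT : Function.Surjective T) :
    Function.Surjective (ddMap T) :=
  let ⟨_, hK⟩ := antilipschitz_dMap_of_surjective T hT
  dMap_surjective_of_antilipschitz _ hK

end Adjoint

theorem arens2_apply {A : Type*} [NonUnitalNormedRing A] [NormedSpace ℝ A]
    [IsScalarTower ℝ A A] [SMulCommClass ℝ A A] (F G : Dual ℝ (Dual ℝ A)) (φ : Dual ℝ A) :
    arens2 A F G φ = G (((arens1 A F).comp (inclusionInDoubleDual ℝ A)).flip φ) :=
  rfl

theorem arens1_eq_arens2_of_forall_exists {A : Type*} [NonUnitalNormedRing A] [NormedSpace ℝ A]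
    [IsScalarTower ℝ A A] [SMulCommClass ℝ A A] (F : Dual ℝ (Dual ℝ A))
    (hF : ∀ φ : Dual ℝ A, ∃ a' : Dual ℝ A, ∀ G, arens1 A F G φ = G a') (G : Dual ℝ (Dual ℝ A)) :
    arens1 A F G = arens2 A F G := by
  ext φ
  obtain ⟨a', ha'⟩ := hF φ
  have ha'_eq : a' = ((arens1 A F).comp (inclusionInDoubleDual ℝ A)).flip φ :=
    ContinuousLinearMap.ext fun b => (ha' (inclusionInDoubleDual ℝ A b)).symm
  rw [ha', arens2_apply, ha'_eq]

theorem arensRegular_of_surjective_derivation_general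
    (D : A →L[ℝ] Dual ℝ A)
    (hsurj : Function.Surjective D)
    (hcond : ∀ F H : Dual ℝ (Dual ℝ A),
      ∃ a' : Dual ℝ A, ∀ G : Dual ℝ (Dual ℝ A), ddMap D F (arens1 A H G) = G a')
    (F G : Dual ℝ (Dual ℝ A)) :
    arens1 A F G = arens2 A F G := by
  refine arens1_eq_arens2_of_forall_exists F (fun φ => ?_) G
  obtain ⟨g, hg⟩ := ddMap_surjective_of_surjective D hsurj (inclusionInDoubleDual ℝ _ φ)
  obtain ⟨a', ha'⟩ := hcond g F
  exact ⟨a', fun G => by rw [← ha', hg]; rfl⟩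

/-- If `D : A → A*` is a surjective derivation with `D''(A**) · A** ⊆ A*`, then `A` is
Arens regular. -/
theorem arensRegular_of_surjective_derivation
    (D : A →L[ℝ] Dual ℝ A)
    (hD : ∀ a b : A,
      D (a * b) = dMap ((ContinuousLinearMap.mul ℝ A).flip a) (D b) +
        dMap (ContinuousLinearMap.mul ℝ A b) (D a))
    (hsurj : Function.Surjective D)
    (hcond : ∀ F H : Dual ℝ (Dual ℝ A),
      ∃ a' : Dual ℝ A, ∀ G : Dual ℝ (Dual ℝ A), ddMap D F (arens1 A H G) = G a')
    (F G : Dual ℝ (Dual ℝ A)) :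
    arens1 A F G = arens2 A F G :=
  arensRegular_of_surjective_derivation_general D hsurj hcond F G
end
end
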